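/- Let n ≥ 2 and fix i ≠ j with 1 ≤ i, j ≤ n. Let w be the permutation of {1,…,n} with w(i) = 1, w(j) = n, and whose values at the remaining positions, read in increasing order of position, are n−1, n−2, …, 2 in decreasing order. Then ℓ(w) = n(n−1)/2 − (j−1+n−i) if j < i, and ℓ(w) = n(n−1)/2 − (j−2+n−i) if j > i. -/

import Mathlib

open Matrix

noncomputable section

/-- The length of a permutation: its number of inversions. -/
def invLen {n : ℕ} (w : Equiv.Perm (Fin n)) : ℕ :=
  (Finset.univ.filter (fun p : Fin n × Fin n => p.1 < p.2 ∧ w p.2 < w p.1)).card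

def IsTransposition {n : ℕ} (t : Equiv.Perm (Fin n)) : Prop :=
  ∃ a b : Fin n, a ≠ b ∧ t = Equiv.swap a b

/-- `BruhatCovers w v` means `w` covers `v` in the Bruhat order:
`v = w·t` for some transposition `t` and `ℓ(v) = ℓ(w) − 1`. -/
def BruhatCovers {n : ℕ} (w v : Equiv.Perm (Fin n)) : Prop :=
  (∃ t, IsTransposition t ∧ v = w * t) ∧ invLen v + 1 = invLen w

/-- The Bruhat order: reflexive–transitive closure of the covering relation. -/
def BruhatLE {n : ℕ} (v w : Equiv.Perm (Fin n)) : Prop :=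
  Relation.ReflTransGen (fun x y => BruhatCovers y x) v w

def BruhatLT {n : ℕ} (v w : Equiv.Perm (Fin n)) : Prop :=
  BruhatLE v w ∧ v ≠ w

/-- The matrix unit `E_{kl}`. -/
def stdE (n : ℕ) (k l : Fin n) : Matrix (Fin n) (Fin n) ℂ := Matrix.single k l 1

/-- The permutation matrix of `σ`: entry `(k,l)` is `1` iff `k = σ(l)`. -/
def permMat {n : ℕ} (σ : Equiv.Perm (Fin n)) : Matrix (Fin n) (Fin n) ℂ :=
  Matrix.of fun k l => if k = σ l then 1 else 0

/-- The Hessenberg space of a (1-based) Hessenberg function `h`: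
matrices `M` with `M_{kl} = 0` whenever `k > h(l)`.  Row index `k : Fin n`
corresponds to the 1-based row `(k : ℕ) + 1`. -/
def HessSpace {n : ℕ} (h : Fin n → ℕ) : Set (Matrix (Fin n) (Fin n) ℂ) :=
  {M | ∀ k l : Fin n, h l < (k : ℕ) + 1 → M k l = 0}

/-- The span `H_{ij}` of the matrix units `E_{kl}` with `k ≤ i` and `l ≥ j`
(`i`, `j`, `k`, `l` all 1-based): matrices vanishing outside the
upper-right `i × (n−j+1)` rectangle. -/
def Hrect (n i j : ℕ) : Set (Matrix (Fin n) (Fin n) ℂ) :=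
  {M | ∀ k l : Fin n, ¬((k : ℕ) + 1 ≤ i ∧ j ≤ (l : ℕ) + 1) → M k l = 0}

/-! The non-inversions of `w` are exactly the pairs starting at the position `a` of the smallest
value or ending at the position `b` of the largest one, since `w` is decreasing on all other
positions. There are `(n - 1 - a) + b` such pairs (`a`, `b` counted from `0`), minus one when
`a < b`, because then `(a, b)` is counted twice; the length is `n(n-1)/2` minus that number. -/

open Finset

theorem invLen_add_card_filter_lt_and_lt {n : ℕ} (w : Equiv.Perm (Fin n)) :
    invLen w + #{p : Fin n × Fin n | p.1 < p.2 ∧ w p.1 < w p.2} = n.choose 2 := by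
  have hpairs : #{p : Fin n × Fin n | p.1 < p.2} = n.choose 2 := by
    simpa using Fintype.card_product_filter_lt (α := Fin n)
  rw [← hpairs,
    ← card_filter_add_card_filter_not (s := {p : Fin n × Fin n | p.1 < p.2})
      (p := fun p => w p.2 < w p.1), invLen, filter_filter, filter_filter]
  congr 2 with p
  simp only [mem_filter, mem_univ, true_and]
  refine and_congr_right fun h => ?_
  rw [not_lt, le_iff_lt_or_eq, or_iff_left (w.injective.ne h.ne)]

theorem Equiv.Perm.apply_lt_apply_iff_of_apply_eq_zero_of_apply_eq_last {n : ℕ}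
    (w : Equiv.Perm (Fin n)) {a b : Fin n} (ha : (w a : ℕ) = 0) (hb : (w b : ℕ) = n - 1)
    (hdec : ∀ p q, p ≠ a → p ≠ b → q ≠ a → q ≠ b → p < q → w q < w p)
    {p q : Fin n} (hpq : p < q) : w p < w q ↔ p = a ∨ q = b := by
  have hne : (w p : ℕ) ≠ w q := Fin.val_ne_of_ne (w.injective.ne hpq.ne)
  have hp := (w p).isLt
  have hq := (w q).isLt
  constructor
  · intro hlt
    by_contra! h
    refine (hlt.asymm ?_).elim
    by_cases hpb : p = b
    · subst hpb; rw [Fin.lt_def]; omega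
    by_cases hqa : q = a
    · subst hqa; rw [Fin.lt_def]; omega
    exact hdec p q h.1 hpb hqa h.2 hpq
  · rintro (rfl | rfl) <;> rw [Fin.lt_def] <;> omega

theorem Fin.card_filter_lt_and_eq_or_eq {n : ℕ} (a b : Fin n) :
    #{p : Fin n × Fin n | p.1 < p.2 ∧ (p.1 = a ∨ p.2 = b)} + (if a < b then 1 else 0)
      = (n - 1 - a) + b := by
  have hunion : ({p : Fin n × Fin n | p.1 < p.2 ∧ (p.1 = a ∨ p.2 = b)} : Finset _)
      = ({a} ×ˢ Ioi a) ∪ (Iio b ×ˢ {b}) := by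
    ext ⟨p, q⟩
    simp only [mem_filter, mem_univ, true_and, mem_union, mem_product, mem_Ioi, mem_Iio,
      mem_singleton]
    constructor
    · rintro ⟨hpq, rfl | rfl⟩
      exacts [Or.inl ⟨rfl, hpq⟩, Or.inr ⟨hpq, rfl⟩]
    · rintro (⟨rfl, h⟩ | ⟨h, rfl⟩)
      exacts [⟨h, Or.inl rfl⟩, ⟨h, Or.inr rfl⟩]
  have hinter : ({a} ×ˢ Ioi a) ∩ (Iio b ×ˢ {b}) = if a < b then {(a, b)} else ∅ := by
    rw [product_inter_product]
    split_ifs with hab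
    · rw [singleton_inter_of_mem (mem_Iio.2 hab), inter_singleton_of_mem (mem_Ioi.2 hab),
        singleton_product_singleton]
    · rw [singleton_inter_of_notMem (mt mem_Iio.1 hab), empty_product]
  have := card_union_add_card_inter ({a} ×ˢ Ioi a) (Iio b ×ˢ {b})
  rw [hinter, apply_ite card, card_singleton, card_empty, card_product, card_product,
    card_singleton, card_singleton, Fin.card_Ioi, Fin.card_Iio, one_mul, mul_one] at this
  rwa [hunion]

/-- with `w` the permutation with `w(i)=1`, `w(j)=n` and remaining
values `n−1,…,2` in decreasing order:
`ℓ(w) = n(n−1)/2 − (j−1+n−i)` if `j < i`, and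
`ℓ(w) = n(n−1)/2 − (j−2+n−i)` if `j > i`. -/
theorem stmt9 (n : ℕ) (i j : ℕ) (hi1 : 1 ≤ i) (hin : i ≤ n)
    (hj1 : 1 ≤ j) (hjn : j ≤ n) (w : Equiv.Perm (Fin n))
    (hwi : w ⟨i - 1, by omega⟩ = ⟨0, by omega⟩)
    (hwj : w ⟨j - 1, by omega⟩ = ⟨n - 1, by omega⟩)
    (hdec : ∀ p q : Fin n, p ≠ ⟨i - 1, by omega⟩ → p ≠ ⟨j - 1, by omega⟩ →
      q ≠ ⟨i - 1, by omega⟩ → q ≠ ⟨j - 1, by omega⟩ → p < q → w q < w p) :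
    (j < i → invLen w = n * (n - 1) / 2 - (j - 1 + n - i)) ∧
    (i < j → invLen w = n * (n - 1) / 2 - (j - 2 + n - i)) := by
  set a : Fin n := ⟨i - 1, by omega⟩
  set b : Fin n := ⟨j - 1, by omega⟩
  have hsplit := invLen_add_card_filter_lt_and_lt w
  rw [filter_congr fun p _ => and_congr_right
    (w.apply_lt_apply_iff_of_apply_eq_zero_of_apply_eq_last (congrArg Fin.val hwi)
      (congrArg Fin.val hwj) hdec), Nat.choose_two_right] at hsplit
  have hcount := Fin.card_filter_lt_and_eq_or_eq a b
  have ha : (a : ℕ) = i - 1 := rfl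
  have hb : (b : ℕ) = j - 1 := rfl
  have hab : a < b ↔ i < j := by rw [Fin.lt_def, ha, hb]; omega
  refine ⟨fun hji => ?_, fun hij => ?_⟩
  · rw [if_neg (hab.not.mpr (by omega))] at hcount
    omega
  · rw [if_pos (hab.mpr hij)] at hcount
    omega
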